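/- Assume that any of the following conditions holds: (i) 𝒜^∞ ⊆ 𝒳₊ and there exists no scalable arbitrage opportunity; (ii) 𝒫^∞ ⊆ ℝ^N₊, V₁(x) ∈ 𝒳₊ for every x ∈ ℝ^N₊, and there exists no scalable arbitrage opportunity; (iii) 𝒫 is bounded. Then there exists no scalable acceptable deal; moreover, under condition (iii) one has ℒ = {0}. -/

import Mathlib

open Topology Filter Set Pointwise

noncomputable section

/-- The asymptotic cone `C^∞` of a set `C` in a real topological vector space: the set of all
limits `z` of nets `l_α • c_α` with `c_α ∈ C`, `l_α ≥ 0`, `l_α → 0`, expressed via the standard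
neighborhood characterization of net convergence. -/
def asymCone {E : Type*} [AddCommMonoid E] [SMul ℝ E] [TopologicalSpace E] (C : Set E) :
    Set E :=
  {z | ∀ U ∈ 𝓝 z, ∀ ε : ℝ, 0 < ε → ∃ c ∈ C, ∃ l : ℝ, 0 ≤ l ∧ l < ε ∧ l • c ∈ U}

/-- Epigraph of a real-valued function. -/
def epigraph {E : Type*} (f : E → ℝ) : Set (E × ℝ) := {p | f p.1 ≤ p.2}

/-- The risk measure `ρ` associated to `(A, P, V₀, V₁)`, valued in the extended reals
(`sInf ∅ = ⊤`). -/
def riskM {X : Type*} [AddCommMonoid X] {N : ℕ} (A : Set X) (P : Set (Fin N → ℝ))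
    (V₀ : (Fin N → ℝ) → ℝ) (V₁ : (Fin N → ℝ) → X) (Z : X) : EReal :=
  sInf ((fun x => ((V₀ x : ℝ) : EReal)) '' {x | x ∈ P ∧ Z + V₁ x ∈ A})

/-- The set `ℒ = {x ∈ 𝒫^∞ : V₀^∞(x) ≤ 0, V₁(x) ∈ 𝒜^∞}`.  Here `V₀^∞(x) ≤ 0` is expressed as
`(x, 0)` belonging to the asymptotic cone of the epigraph of `V₀`, which is by definition the
epigraph of `V₀^∞`. -/
def Lset {X : Type*} [AddCommMonoid X] [SMul ℝ X] [TopologicalSpace X] {N : ℕ}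
    (A : Set X) (P : Set (Fin N → ℝ)) (V₀ : (Fin N → ℝ) → ℝ) (V₁ : (Fin N → ℝ) → X) :
    Set (Fin N → ℝ) :=
  {x | x ∈ asymCone P ∧ (x, (0 : ℝ)) ∈ asymCone (epigraph V₀) ∧ V₁ x ∈ asymCone A}

/-- Upper semicontinuity of the liquidation rule `V₁` relative to the ordering cone `Xp`:
for every `x` and every neighborhood `U` of `V₁ x` there is a neighborhood `W` of `x` with
`V₁(W) ⊆ U - Xp`. -/
def USCV1 {X : Type*} [AddCommGroup X] [TopologicalSpace X] {N : ℕ}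
    (Xp : Set X) (V₁ : (Fin N → ℝ) → X) : Prop :=
  ∀ x : Fin N → ℝ, ∀ U ∈ 𝓝 (V₁ x), ∃ W ∈ 𝓝 x, ∀ y ∈ W, ∃ u ∈ U, ∃ p ∈ Xp, V₁ y = u - p

/-- There exists no scalable arbitrage opportunity: no `x ∈ 𝒫^∞` with `V₀^∞(x) ≤ 0` and
`V₁(x) ∈ (𝒳₊)^∞`, `V₁(x) ≠ 0`. -/
def NoScalArb {X : Type*} [AddCommGroup X] [Module ℝ X] [TopologicalSpace X] {N : ℕ}
    (Xp : Set X) (P : Set (Fin N → ℝ)) (V₀ : (Fin N → ℝ) → ℝ) (V₁ : (Fin N → ℝ) → X) :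
    Prop :=
  ¬∃ x : Fin N → ℝ, x ∈ asymCone P ∧ (x, (0 : ℝ)) ∈ asymCone (epigraph V₀) ∧
    V₁ x ∈ asymCone Xp ∧ V₁ x ≠ 0

/-
Under (i) or (ii) the payoff `V₁ x` of any `x ∈ ℒ` lies in the cone `𝒳₊`, hence in its asymptotic
cone, so a scalable acceptable deal would be a scalable arbitrage opportunity. Under (iii) the
asymptotic cone of the bounded set `𝒫` is `{0}`, so `ℒ ⊆ {0}`, and `0 ∈ ℒ` always.
-/

section AsymptoticCone

variable {E : Type*} [AddCommMonoid E] [Module ℝ E] [TopologicalSpace E]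

lemma zero_mem_asymCone {C : Set E} (hC : C.Nonempty) : (0 : E) ∈ asymCone C := by
  intro U hU ε hε
  obtain ⟨c, hc⟩ := hC
  exact ⟨c, hc, 0, le_rfl, hε, by simpa using mem_of_mem_nhds hU⟩

lemma mem_asymCone_of_smul_mem {C : Set E} {z : E} (hz : ∀ c : ℝ, 0 < c → c • z ∈ C) :
    z ∈ asymCone C := by
  intro U hU ε hε
  refine ⟨(2 / ε) • z, hz _ (by positivity), ε / 2, by positivity, by linarith, ?_⟩
  rw [smul_smul, div_mul_div_cancel₀ (by positivity : (2 : ℝ) ≠ 0), div_self hε.ne', one_smul]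
  exact mem_of_mem_nhds hU

end AsymptoticCone

lemma asymCone_subset_zero_of_isBounded {E : Type*} [NormedAddCommGroup E] [NormedSpace ℝ E]
    {C : Set E} (hC : Bornology.IsBounded C) : asymCone C ⊆ {0} := by
  intro z hz
  by_contra hz0
  have hz_pos : 0 < ‖z‖ := norm_pos_iff.2 hz0
  obtain ⟨M, hM_pos, hM⟩ := hC.exists_pos_norm_le
  obtain ⟨c, hc, l, hl0, hlε, hlc⟩ :=
    hz _ (Metric.ball_mem_nhds z (half_pos hz_pos)) (‖z‖ / (2 * M)) (by positivity)
  have h_near : ‖z - l • c‖ < ‖z‖ / 2 := by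
    rwa [Metric.mem_ball, dist_comm, dist_eq_norm] at hlc
  have h_small : ‖l • c‖ < ‖z‖ / 2 :=
    calc ‖l • c‖ = l * ‖c‖ := by rw [norm_smul, Real.norm_of_nonneg hl0]
      _ ≤ l * M := mul_le_mul_of_nonneg_left (hM c hc) hl0
      _ < ‖z‖ / (2 * M) * M := mul_lt_mul_of_pos_right hlε hM_pos
      _ = ‖z‖ / 2 := by field_simp
  have := norm_le_norm_sub_add z (l • c)
  linarith

section Lset

variable {X : Type*} [AddCommGroup X] [Module ℝ X] [TopologicalSpace X] {N : ℕ}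
  {A : Set X} {P : Set (Fin N → ℝ)} {V₀ : (Fin N → ℝ) → ℝ} {V₁ : (Fin N → ℝ) → X}

lemma zero_mem_Lset (hP0 : 0 ∈ P) (hV₀0 : V₀ 0 = 0) (hV₁0 : V₁ 0 = 0) (hA0 : 0 ∈ A) :
    0 ∈ Lset A P V₀ V₁ :=
  ⟨zero_mem_asymCone ⟨0, hP0⟩,
    zero_mem_asymCone (C := epigraph V₀) ⟨0, by simp [epigraph, hV₀0]⟩,
    hV₁0 ▸ zero_mem_asymCone ⟨0, hA0⟩⟩

lemma Lset_eq_zero_of_isBounded (hP : Bornology.IsBounded P) (hP0 : 0 ∈ P)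
    (hV₀0 : V₀ 0 = 0) (hV₁0 : V₁ 0 = 0) (hA0 : 0 ∈ A) : Lset A P V₀ V₁ = {0} :=
  Set.Subset.antisymm (fun _ hx => asymCone_subset_zero_of_isBounded hP hx.1)
    (Set.singleton_subset_iff.2 (zero_mem_Lset hP0 hV₀0 hV₁0 hA0))

lemma not_exists_mem_Lset_of_noScalArb {Xp : Set X} (hXp : ∀ c : ℝ, 0 ≤ c → ∀ z ∈ Xp, c • z ∈ Xp)
    (hNSA : NoScalArb Xp P V₀ V₁) (hpayoff : ∀ x ∈ Lset A P V₀ V₁, V₁ x ∈ Xp) :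
    ¬∃ x, x ∈ Lset A P V₀ V₁ ∧ V₁ x ≠ 0 := by
  rintro ⟨x, hx, hx0⟩
  exact hNSA ⟨x, hx.1, hx.2.1,
    mem_asymCone_of_smul_mem fun c hc => hXp c hc.le _ (hpayoff x hx), hx0⟩

end Lset

theorem stmt19_general
    {X : Type*} [AddCommGroup X] [Module ℝ X] [TopologicalSpace X]
    (Xp : Set X) (hXp_cone : ∀ c : ℝ, 0 ≤ c → ∀ z ∈ Xp, c • z ∈ Xp)
    {N : ℕ}
    (P : Set (Fin N → ℝ)) (hP0 : (0 : Fin N → ℝ) ∈ P)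
    (V₀ : (Fin N → ℝ) → ℝ) (hV₀0 : V₀ 0 = 0)
    (V₁ : (Fin N → ℝ) → X) (hV₁0 : V₁ 0 = 0)
    (A : Set X) (hA0 : (0 : X) ∈ A)
    (hcond : (asymCone A ⊆ Xp ∧ NoScalArb Xp P V₀ V₁) ∨
      ((asymCone P ⊆ {x : Fin N → ℝ | ∀ i, 0 ≤ x i} ∧
        (∀ x : Fin N → ℝ, (∀ i, 0 ≤ x i) → V₁ x ∈ Xp) ∧ NoScalArb Xp P V₀ V₁)) ∨
      Bornology.IsBounded P) :
    (¬∃ x, x ∈ Lset A P V₀ V₁ ∧ V₁ x ≠ 0) ∧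
    (Bornology.IsBounded P → Lset A P V₀ V₁ = {0}) := by
  have hbdd (hP : Bornology.IsBounded P) : Lset A P V₀ V₁ = {0} :=
    Lset_eq_zero_of_isBounded hP hP0 hV₀0 hV₁0 hA0
  refine ⟨?_, hbdd⟩
  rcases hcond with ⟨hAXp, hNSA⟩ | ⟨hPpos, hV₁pos, hNSA⟩ | hP
  · exact not_exists_mem_Lset_of_noScalArb hXp_cone hNSA fun x hx => hAXp hx.2.2
  · exact not_exists_mem_Lset_of_noScalArb hXp_cone hNSA fun x hx => hV₁pos x (hPpos hx.1)
  · rintro ⟨x, hx, hx0⟩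
    rw [hbdd hP] at hx
    exact hx0 (hx ▸ hV₁0)

theorem stmt19
    {X : Type*} [AddCommGroup X] [Module ℝ X] [TopologicalSpace X]
    [IsTopologicalAddGroup X] [ContinuousSMul ℝ X]
    (Xp : Set X) (hXp_cone : ∀ c : ℝ, 0 ≤ c → ∀ z ∈ Xp, c • z ∈ Xp)
    (hXp_conv : Convex ℝ Xp)
    {N : ℕ} (hN : 1 ≤ N)
    (P : Set (Fin N → ℝ)) (hP0 : (0 : Fin N → ℝ) ∈ P)
    (V₀ : (Fin N → ℝ) → ℝ) (hV₀0 : V₀ 0 = 0) (hV₀sp : ∀ x, -V₀ (-x) ≤ V₀ x)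
    (V₁ : (Fin N → ℝ) → X) (hV₁0 : V₁ 0 = 0) (hV₁sp : ∀ x, -V₁ (-x) - V₁ x ∈ Xp)
    (A : Set X) (hA0 : (0 : X) ∈ A) (hAmono : ∀ a ∈ A, ∀ p ∈ Xp, a + p ∈ A)
    (hcond : (asymCone A ⊆ Xp ∧ NoScalArb Xp P V₀ V₁) ∨
      ((asymCone P ⊆ {x : Fin N → ℝ | ∀ i, 0 ≤ x i} ∧
        (∀ x : Fin N → ℝ, (∀ i, 0 ≤ x i) → V₁ x ∈ Xp) ∧ NoScalArb Xp P V₀ V₁)) ∨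
      Bornology.IsBounded P) :
    (¬∃ x, x ∈ Lset A P V₀ V₁ ∧ V₁ x ≠ 0) ∧
    (Bornology.IsBounded P → Lset A P V₀ V₁ = {0}) :=
  stmt19_general Xp hXp_cone P hP0 V₀ hV₀0 V₁ hV₁0 A hA0 hcond
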